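/- arXiv:1910.00670 — 5 statements merged into one kernel-verified Lean document; each statement's English description precedes it below -/
import Mathlib

section
/- Let Γ be a finite connected simple graph and let T be a collection of tubes of Γ. Then T is a tubing of Γ if and only if T is a topological basis on the vertex set of Γ such that the following connectivity condition holds: for every pair of vertices {v,v'}, if {v,v'} is an edge of Γ or an edge of the reconnected complement Γ_t^* for some t ∈ T, then the two-point set {v,v'} is topologically connected as a subspace in the topology generated by T. -/
open scoped Classical
open TensorProduct

noncomputable section

/-- A finite simple graph whose vertices are a finite set of (totally ordered) naturals. -/
structure FinGraph : Type where
  verts : Finset ℕ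
  Adj : ℕ → ℕ → Prop
  symm : ∀ v w, Adj v w → Adj w v
  loopless : ∀ v, ¬ Adj v v
  support : ∀ v w, Adj v w → v ∈ verts ∧ w ∈ verts

namespace CDTub

/-- Connectivity of a vertex set within a graph: any two of its vertices are joined by a
walk staying inside the set. -/
def VConn (G : FinGraph) (s : Finset ℕ) : Prop :=
  ∀ v ∈ s, ∀ w ∈ s, Relation.ReflTransGen (fun a b => a ∈ s ∧ b ∈ s ∧ G.Adj a b) v w

/-- A tube: a nonempty set of vertices inducing a connected subgraph. -/
def IsTube (G : FinGraph) (t : Finset ℕ) : Prop :=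
  t.Nonempty ∧ t ⊆ G.verts ∧ VConn G t

/-- A connected (nonempty) graph: the universal tube is a tube. -/
def IsConnGraph (G : FinGraph) : Prop := IsTube G G.verts

/-- Two vertex sets are far apart: disjoint and with no edge between them. -/
def FarApart (G : FinGraph) (a b : Finset ℕ) : Prop :=
  Disjoint a b ∧ ¬ ∃ v ∈ a, ∃ w ∈ b, G.Adj v w

/-- Compatible tubes: nested or far apart. -/
def Compatible (G : FinGraph) (a b : Finset ℕ) : Prop :=
  a ⊆ b ∨ b ⊆ a ∨ FarApart G a b

/-- Linked tubes: disjoint and joined by an edge. -/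
def Linked (G : FinGraph) (a b : Finset ℕ) : Prop :=
  Disjoint a b ∧ ∃ v ∈ a, ∃ w ∈ b, G.Adj v w

/-- A tubing of a connected graph: pairwise compatible tubes containing the universal tube. -/
def IsTubing (G : FinGraph) (T : Finset (Finset ℕ)) : Prop :=
  G.verts ∈ T ∧ (∀ t ∈ T, IsTube G t) ∧
    ∀ t ∈ T, ∀ t' ∈ T, t ≠ t' → Compatible G t t'

/-- Induced subgraph on a set of vertices. -/
def induce (G : FinGraph) (t : Finset ℕ) : FinGraph where
  verts := t
  Adj v w := v ∈ t ∧ w ∈ t ∧ G.Adj v w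
  symm := fun v w h => ⟨h.2.1, h.1, G.symm v w h.2.2⟩
  loopless := fun v h => G.loopless v h.2.2
  support := fun _ _ h => ⟨h.1, h.2.1⟩

/-- Simultaneous reconnected complement with respect to a family `F` of tubes
(for a single tube, or a family of pairwise far apart tubes, this is the (iterated)
reconnected complement). -/
def reconnAll (G : FinGraph) (F : Finset (Finset ℕ)) : FinGraph where
  verts := G.verts \ F.biUnion id
  Adj v w := v ≠ w ∧ v ∈ G.verts \ F.biUnion id ∧ w ∈ G.verts \ F.biUnion id ∧
    (G.Adj v w ∨ ∃ f ∈ F, (∃ u ∈ f, G.Adj v u) ∧ ∃ u' ∈ f, G.Adj w u')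
  symm := by
    rintro v w ⟨hne, hv, hw, h⟩
    refine ⟨hne.symm, hw, hv, ?_⟩
    rcases h with h | ⟨f, hf, h1, h2⟩
    · exact Or.inl (G.symm _ _ h)
    · exact Or.inr ⟨f, hf, h2, h1⟩
  loopless := fun v h => h.1 rfl
  support := fun _ _ h => ⟨h.2.1, h.2.2.1⟩

/-- Reconnected complement `Γ_t^*` of a graph with respect to a tube. -/
def reconn (G : FinGraph) (t : Finset ℕ) : FinGraph := reconnAll G {t}

/-- The proper tubes of a tubing. -/
def properTubes (G : FinGraph) (T : Finset (Finset ℕ)) : Finset (Finset ℕ) :=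
  T.filter (fun s => s ≠ G.verts)

/-- The maximal proper tubes of a tubing. -/
def MaxtP (G : FinGraph) (T : Finset (Finset ℕ)) : Finset (Finset ℕ) :=
  (properTubes G T).filter (fun s => ∀ s' ∈ properTubes G T, s ⊆ s' → s = s')

/-- The iterated reconnected complement `Γ_T^*` with respect to the maximal proper tubes. -/
def gammaStar (G : FinGraph) (T : Finset (Finset ℕ)) : FinGraph :=
  reconnAll G (MaxtP G T)

/-- Restriction `T|_t` of a tubing to a tube. -/
def restrictT (T : Finset (Finset ℕ)) (t : Finset ℕ) : Finset (Finset ℕ) :=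
  T.filter (fun s => s ⊆ t)

/-- For a tube `s` of `Γ_T^*`, the tube `s̃` of `Γ`: the union of `s` with all maximal
proper tubes of `T` linked to `s`. -/
def tildeT (G : FinGraph) (T : Finset (Finset ℕ)) (s : Finset ℕ) : Finset ℕ :=
  s ∪ ((MaxtP G T).filter (fun m => Linked G m s)).biUnion id

/-- Substitution `T •_Γ S` of a tubing `S` of `Γ_T^*` into the tubing `T`. -/
def substT (G : FinGraph) (T S : Finset (Finset ℕ)) : Finset (Finset ℕ) :=
  T ∪ S.image (tildeT G T)

/-- The `t`-substitution `γ_t(T;S) = T ∪ (T|_t •_{Γ_t} S)`. -/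
def gammaSub (G : FinGraph) (T : Finset (Finset ℕ)) (t : Finset ℕ)
    (S : Finset (Finset ℕ)) : Finset (Finset ℕ) :=
  T ∪ substT (induce G t) (restrictT T t) S

/-- The tubing `T_t^*` induced on the reconnected complement `Γ_t^*`. -/
def indStar (T : Finset (Finset ℕ)) (t : Finset ℕ) : Finset (Finset ℕ) :=
  T.filter (fun s => Disjoint s t) ∪ (T.filter (fun s => t ⊂ s)).image (fun s => s \ t)

/-- The operation `T ◇ S` of Definition 2.4(2). -/
def diamond (G : FinGraph) (T : Finset (Finset ℕ)) (t : Finset ℕ)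
    (S : Finset (Finset ℕ)) : Finset (Finset ℕ) :=
  T ∪ S.filter (fun s => ¬ Linked G s t) ∪
    (S.filter (fun s => Linked G s t)).image (fun s => s ∪ t)

/-- The tubes of `T`, viewed as subsets of the subtype of vertices. -/
def tubeSets (G : FinGraph) (T : Finset (Finset ℕ)) : Set (Set {x // x ∈ G.verts}) :=
  {U | ∃ t ∈ T, U = {x : {x // x ∈ G.verts} | (x : ℕ) ∈ t}}

/-- The topology on the vertex set generated by the tubes of `T`. -/
def tubingTop (G : FinGraph) (T : Finset (Finset ℕ)) :
    TopologicalSpace {x // x ∈ G.verts} :=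
  TopologicalSpace.generateFrom (tubeSets G T)

/-- One-line notation of the permutation `σ_t`: the vertices of `t` in increasing order
followed by the remaining vertices in increasing order. -/
def sigmaList (X t : Finset ℕ) : List ℕ :=
  t.sort (· ≤ ·) ++ (X \ t).sort (· ≤ ·)

/-- Number of `Γ`-inversions of a permutation given by its one-line notation `l`:
pairs of positions `p < q` carrying values `a > b` which form an edge of `Γ`. -/
def invCount (G : FinGraph) (l : List ℕ) : ℕ :=
  ((Finset.range l.length ×ˢ Finset.range l.length).filter
    (fun pq => pq.1 < pq.2 ∧ l.getD pq.2 0 < l.getD pq.1 0 ∧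
      G.Adj (l.getD pq.1 0) (l.getD pq.2 0))).card

/-- The signature `sgn^Γ(σ) = (-1)^{inv_Γ(σ)}`. -/
def graphSgn (G : FinGraph) (l : List ℕ) : ℤ := (-1) ^ invCount G l

/-- Rank (1-based) of `v` inside a finite set `X` of naturals: the order-preserving
relabelling of `X` by `{1,…,|X|}`. -/
def rk (X : Finset ℕ) (v : ℕ) : ℕ := (X.filter (fun u => u ≤ v)).card

/-- Order-preserving relabelling of a graph by the initial segment `{1,…,n}`. -/
def relabelG (G : FinGraph) : FinGraph where
  verts := G.verts.image (rk G.verts)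
  Adj i j := i ≠ j ∧ ∃ v w, G.Adj v w ∧ i = rk G.verts v ∧ j = rk G.verts w
  symm := by
    rintro i j ⟨hne, v, w, h, hi, hj⟩
    exact ⟨hne.symm, w, v, G.symm _ _ h, hj, hi⟩
  loopless := fun _ h => h.1 rfl
  support := by
    rintro i j ⟨hne, v, w, h, hi, hj⟩
    exact ⟨Finset.mem_image.mpr ⟨v, (G.support _ _ h).1, hi.symm⟩,
      Finset.mem_image.mpr ⟨w, (G.support _ _ h).2, hj.symm⟩⟩

/-- Order-preserving relabelling of a subset of `X`. -/
def relabelF (X t : Finset ℕ) : Finset ℕ := t.image (rk X)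

/-- Order-preserving relabelling of a family of subsets of `X`. -/
def relabelT (X : Finset ℕ) (T : Finset (Finset ℕ)) : Finset (Finset ℕ) :=
  T.image (relabelF X)

/-- Connected components (in `G`) of a set of vertices. -/
def comps (G : FinGraph) (s : Finset ℕ) : Finset (Finset ℕ) :=
  s.image (fun v => s.filter (fun w =>
    Relation.ReflTransGen (fun a b => a ∈ s ∧ b ∈ s ∧ G.Adj a b) v w))

/-- The restriction map `res_Ω^Γ` on tubings: replace each tube by its connected
components in `Ω`. -/
def resT (Om : FinGraph) (T : Finset (Finset ℕ)) : Finset (Finset ℕ) :=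
  T.biUnion (comps Om)

/-- Shift of a vertex set by `n`. -/
def shiftF (n : ℕ) (s : Finset ℕ) : Finset ℕ := s.image (fun v => v + n)

/-- Shift of a family of vertex sets by `n`. -/
def shiftT (n : ℕ) (S : Finset (Finset ℕ)) : Finset (Finset ℕ) := S.image (shiftF n)

/-- Shift of a graph by `n`. -/
def shiftG (n : ℕ) (G : FinGraph) : FinGraph where
  verts := shiftF n G.verts
  Adj v w := ∃ a b, G.Adj a b ∧ v = a + n ∧ w = b + n
  symm := by
    rintro v w ⟨a, b, h, rfl, rfl⟩
    exact ⟨b, a, G.symm _ _ h, rfl, rfl⟩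
  loopless := by
    rintro v ⟨a, b, h, ha, hb⟩
    have : a = b := by omega
    exact G.loopless b (this ▸ h)
  support := by
    rintro v w ⟨a, b, h, rfl, rfl⟩
    exact ⟨Finset.mem_image.mpr ⟨a, (G.support _ _ h).1, rfl⟩,
      Finset.mem_image.mpr ⟨b, (G.support _ _ h).2, rfl⟩⟩

/-- `X_T` : the vertices belonging to no proper tube of `T`. -/
def freeVerts (G : FinGraph) (T : Finset (Finset ℕ)) : Finset ℕ :=
  G.verts.filter (fun v => ∀ s ∈ T, s ≠ G.verts → v ∉ s)

/-- The endpoint `max X_T` of the joining edge. -/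
def joinA (G : FinGraph) (T : Finset (Finset ℕ)) : ℕ :=
  WithBot.unbotD 0 (freeVerts G T).max

/-- The endpoint `n + min X_S` of the joining edge. -/
def joinB (Om : FinGraph) (S : Finset (Finset ℕ)) (n : ℕ) : ℕ :=
  n + WithTop.untopD 0 (freeVerts Om S).min

/-- Vertex set of the joined graph `Γ ∪_{T,S} Ω`. -/
def joinVerts (G Om : FinGraph) (n : ℕ) : Finset ℕ := G.verts ∪ shiftF n Om.verts

/-- The joined graph `Γ ∪_{T,S} Ω`: the disjoint union (with `Ω` shifted by `n`)
plus one edge from `max X_T` to `n + min X_S`. -/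
def joinG (G Om : FinGraph) (T S : Finset (Finset ℕ)) (n : ℕ) : FinGraph where
  verts := joinVerts G Om n
  Adj v w := G.Adj v w ∨ (shiftG n Om).Adj v w ∨
    (v ≠ w ∧ v ∈ joinVerts G Om n ∧ w ∈ joinVerts G Om n ∧
      ((v = joinA G T ∧ w = joinB Om S n) ∨ (w = joinA G T ∧ v = joinB Om S n)))
  symm := by
    rintro v w (h | h | ⟨hne, hv, hw, hc⟩)
    · exact Or.inl (G.symm _ _ h)
    · exact Or.inr (Or.inl ((shiftG n Om).symm _ _ h))
    · exact Or.inr (Or.inr ⟨hne.symm, hw, hv, hc.symm⟩)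
  loopless := by
    rintro v (h | h | ⟨hne, _⟩)
    · exact G.loopless v h
    · exact (shiftG n Om).loopless v h
    · exact hne rfl
  support := by
    rintro v w (h | h | ⟨_, hv, hw, _⟩)
    · exact ⟨Finset.mem_union_left _ (G.support _ _ h).1,
        Finset.mem_union_left _ (G.support _ _ h).2⟩
    · exact ⟨Finset.mem_union_right _ ((shiftG n Om).support _ _ h).1,
        Finset.mem_union_right _ ((shiftG n Om).support _ _ h).2⟩
    · exact ⟨hv, hw⟩

/-- `T ▷ S`. -/
def trR (G Om : FinGraph) (T S : Finset (Finset ℕ)) (n : ℕ) : Finset (Finset ℕ) :=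
  T ∪ shiftT n (properTubes Om S) ∪ {joinVerts G Om n}

/-- `T ◁ S`. -/
def trL (G Om : FinGraph) (T S : Finset (Finset ℕ)) (n : ℕ) : Finset (Finset ℕ) :=
  properTubes G T ∪ shiftT n S ∪ {joinVerts G Om n}

/-- `T ⊥ S`. -/
def tPerp (G Om : FinGraph) (T S : Finset (Finset ℕ)) (n : ℕ) : Finset (Finset ℕ) :=
  properTubes G T ∪ shiftT n (properTubes Om S) ∪ {joinVerts G Om n}

/-- Equality of graphs: same vertex set and same edges. -/
def GEq (A B : FinGraph) : Prop :=
  A.verts = B.verts ∧ ∀ v w, A.Adj v w ↔ B.Adj v w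

/-- Index type for the basis of `Tub⁺`: `none` is the unit `1`, `some (Γ,T)` is a pair. -/
abbrev TubIdx : Type := Option (FinGraph × Finset (Finset ℕ))

/-- A pair `(Γ,T)` relabelled order-preservingly to standard vertex set, identified
with the unit `1` when the vertex set is empty. -/
def embPair (G : FinGraph) (T : Finset (Finset ℕ)) : TubIdx :=
  if G.verts = ∅ then none else some (relabelG G, relabelT G.verts T)

/-- The value of the pre-Lie coproduct `Δ_•` on a basis element. -/
def deltaFun (K : Type) [CommRing K] (i : TubIdx) :
    (TubIdx →₀ K) ⊗[K] (TubIdx →₀ K) :=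
  match i with
  | none => Finsupp.single (none : TubIdx) (1 : K) ⊗ₜ[K] Finsupp.single (none : TubIdx) (1 : K)
  | some (G, T) =>
      (∑ t ∈ T, (Finsupp.single (embPair (induce G t) (restrictT T t)) (1 : K)) ⊗ₜ[K]
        (Finsupp.single (embPair (reconn G t) (indStar T t)) (1 : K)))
      + (Finsupp.single (none : TubIdx) (1 : K)) ⊗ₜ[K]
          (Finsupp.single (some (G, T) : TubIdx) (1 : K))

/-- The pre-Lie coproduct `Δ_•` on `Tub⁺`, the free module on `TubIdx`. -/
def delta (K : Type) [CommRing K] :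
    (TubIdx →₀ K) →ₗ[K] (TubIdx →₀ K) ⊗[K] (TubIdx →₀ K) :=
  Finsupp.lift ((TubIdx →₀ K) ⊗[K] (TubIdx →₀ K)) K TubIdx (deltaFun K)

end CDTub

/-!
In the topology generated by `T`, a two-point set `{v, w}` is connected exactly when `v` and `w`
are comparable for specialization: every tube of `T` containing one of them contains the other.
For a tubing, two tubes separating the ends of an edge of `Γ` or of `Γ_t^*` would have to be far
apart, which the edge (or the tube `t`, compatible with both) rules out. Conversely, the basis
property provides a minimal tube around each vertex; a smallest incompatible pair of tubes then
leads to a contradiction, and a largest tube is closed under adjacency, so it is universal.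
-/

theorem Specializes.isPreconnected_pair {X : Type*} [TopologicalSpace X] {x y : X}
    (h : x ⤳ y) : IsPreconnected ({x, y} : Set X) :=
  isPreconnected_singleton.subset_closure (Set.singleton_subset_iff.2 (Set.mem_insert x {y}))
    (Set.pair_subset (subset_closure rfl) h.mem_closure)

theorem isPreconnected_pair_iff {X : Type*} [TopologicalSpace X] {x y : X} :
    IsPreconnected ({x, y} : Set X) ↔ x ⤳ y ∨ y ⤳ x := by
  refine ⟨fun h => ?_, fun h => h.elim (·.isPreconnected_pair)
    fun h => Set.pair_comm x y ▸ h.isPreconnected_pair⟩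
  by_contra! ⟨hxy, hyx⟩
  simp only [specializes_iff_forall_open, not_forall, exists_prop] at hxy hyx
  obtain ⟨U, hU, hyU, hxU⟩ := hxy
  obtain ⟨V, hV, hxV, hyV⟩ := hyx
  obtain ⟨z, hz, hzV, hzU⟩ := h V U hV hU (by rintro z (rfl | rfl) <;> simp [*])
    ⟨x, by simp, hxV⟩ ⟨y, by simp, hyU⟩
  rcases hz with rfl | rfl
  exacts [hxU hzU, hyV hzV]

theorem isConnected_pair_iff {X : Type*} [TopologicalSpace X] {x y : X} :
    IsConnected ({x, y} : Set X) ↔ x ⤳ y ∨ y ⤳ x :=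
  ⟨fun h => isPreconnected_pair_iff.1 h.2,
    fun h => ⟨Set.insert_nonempty x {y}, isPreconnected_pair_iff.2 h⟩⟩

theorem TopologicalSpace.specializes_generateFrom_iff {X : Type*} {g : Set (Set X)} {x y : X} :
    @Specializes X (generateFrom g) x y ↔ ∀ s ∈ g, y ∈ s → x ∈ s := by
  let := generateFrom g
  simp only [specializes_iff_pure, nhds_generateFrom, le_iInf_iff, Filter.le_principal_iff,
    Filter.mem_pure, Set.mem_ofPred_eq, and_imp]
  exact ⟨fun h s hs hy => h s hy hs, fun h s hy hs => h s hs hy⟩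

theorem Relation.ReflTransGen.exists_boundary_step {α : Type*} {r : α → α → Prop}
    {P : α → Prop} {x y : α} (h : ReflTransGen r x y) (hx : P x) (hy : ¬ P y) :
    ∃ a b, P a ∧ ¬ P b ∧ r a b := by
  induction h with
  | refl => exact absurd hx hy
  | @tail b c _ hbc ih => exact (em (P b)).elim (fun hb => ⟨b, c, hb, hy, hbc⟩) ih

namespace CDTub

variable {G : FinGraph} {T : Finset (Finset ℕ)}

def ReconnAdj (G : FinGraph) (T : Finset (Finset ℕ)) (v w : ℕ) : Prop :=
  G.Adj v w ∨ ∃ t ∈ T, (reconn G t).Adj v w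

/-- `v` and `w` are comparable in the specialization preorder of `tubingTop G T`. -/
def TubeComparable (T : Finset (Finset ℕ)) (v w : ℕ) : Prop :=
  (∀ t ∈ T, w ∈ t → v ∈ t) ∨ ∀ t ∈ T, v ∈ t → w ∈ t

theorem reconn_adj_iff {t : Finset ℕ} {v w : ℕ} :
    (reconn G t).Adj v w ↔ v ≠ w ∧ v ∈ G.verts \ t ∧ w ∈ G.verts \ t ∧
      (G.Adj v w ∨ (∃ u ∈ t, G.Adj v u) ∧ ∃ u ∈ t, G.Adj w u) := by
  simp [reconn, reconnAll]

theorem ReconnAdj.mem_verts {v w : ℕ} (h : ReconnAdj G T v w) :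
    v ∈ G.verts ∧ w ∈ G.verts := by
  rcases h with h | ⟨t, -, h⟩
  · exact G.support v w h
  · rw [reconn_adj_iff] at h
    exact ⟨(Finset.mem_sdiff.1 h.2.1).1, (Finset.mem_sdiff.1 h.2.2.1).1⟩

theorem TubeComparable.mem_of_mem_of_not_mem {v w : ℕ} {a b : Finset ℕ}
    (h : TubeComparable T v w) (ha : a ∈ T) (hva : v ∈ a) (hwa : w ∉ a) (hb : b ∈ T)
    (hwb : w ∈ b) : v ∈ b :=
  h.elim (fun h => h b hb hwb) fun h => absurd (h a ha hva) hwa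

theorem isConnected_iff_tubeComparable {v w : ℕ} (hv : v ∈ G.verts) (hw : w ∈ G.verts) :
    @IsConnected {x // x ∈ G.verts} (tubingTop G T)
        {x : {x // x ∈ G.verts} | (x : ℕ) = v ∨ (x : ℕ) = w} ↔ TubeComparable T v w := by
  have hpair : {x : {x // x ∈ G.verts} | (x : ℕ) = v ∨ (x : ℕ) = w} = {⟨v, hv⟩, ⟨w, hw⟩} := by
    ext x
    simp [Subtype.ext_iff]
  rw [hpair, @isConnected_pair_iff _ (tubingTop G T), tubingTop,
    TopologicalSpace.specializes_generateFrom_iff,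
    TopologicalSpace.specializes_generateFrom_iff]
  simp [TubeComparable, tubeSets, @forall_comm (Set _)]

theorem forall_compatible_iff :
    (∀ a ∈ T, ∀ b ∈ T, a ≠ b → Compatible G a b) ↔ ∀ a ∈ T, ∀ b ∈ T, Compatible G a b :=
  ⟨fun h a ha b hb => (eq_or_ne a b).elim (fun hab => Or.inl hab.le) (h a ha b hb),
    fun h a ha b hb _ => h a ha b hb⟩

theorem Compatible.farApart {a b : Finset ℕ} {v w : ℕ} (h : Compatible G a b)
    (hva : v ∈ a) (hvb : v ∉ b) (hwb : w ∈ b) (hwa : w ∉ a) : FarApart G a b :=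
  h.elim (fun h => absurd (h hva) hvb) (·.resolve_left fun h => hwa (h hwb))

theorem Compatible.subset_of_adj {t a : Finset ℕ} {u v : ℕ} (h : Compatible G t a)
    (hva : v ∈ a) (hvt : v ∉ t) (hu : u ∈ t) (hvu : G.Adj v u) : t ⊆ a := by
  rcases h with h | h | h
  · exact h
  · exact absurd (h hva) hvt
  · exact absurd ⟨u, hu, v, hva, G.symm v u hvu⟩ h.2

theorem isTopologicalBasis_of_compatible (huniv : G.verts ∈ T)
    (hcompat : ∀ a ∈ T, ∀ b ∈ T, Compatible G a b) :
    @TopologicalSpace.IsTopologicalBasis {x // x ∈ G.verts} (tubingTop G T)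
      (tubeSets G T) := by
  let := tubingTop G T
  refine ⟨?_, ?_, rfl⟩
  · rintro _ ⟨a, ha, rfl⟩ _ ⟨b, hb, rfl⟩ x ⟨hxa, hxb⟩
    rcases hcompat a ha b hb with h | h | h
    · exact ⟨_, ⟨a, ha, rfl⟩, hxa, fun y hy => ⟨hy, h hy⟩⟩
    · exact ⟨_, ⟨b, hb, rfl⟩, hxb, fun y hy => ⟨h hy, hy⟩⟩
    · exact absurd hxb (Finset.disjoint_left.1 h.1 hxa)
  · exact Set.eq_univ_of_forall fun x => ⟨_, ⟨G.verts, huniv, rfl⟩, x.2⟩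

/-- A pair of tubes separating `v` from `w` would have to be far apart, while the tube
reconnecting `v` and `w` in `Γ_t^*` is compatible with both, hence contained in both. -/
theorem tubeComparable_of_compatible (hcompat : ∀ a ∈ T, ∀ b ∈ T, Compatible G a b)
    {v w : ℕ} (hvw : ReconnAdj G T v w) : TubeComparable T v w := by
  by_contra h
  simp only [TubeComparable, not_or, not_forall, exists_prop] at h
  obtain ⟨⟨a, ha, hwa, hva⟩, b, hb, hvb, hwb⟩ := h
  have hfar : FarApart G a b := (hcompat a ha b hb).farApart hwa hwb hvb hva
  rcases hvw with hG | ⟨t, ht, hr⟩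
  · exact hfar.2 ⟨w, hwa, v, hvb, G.symm v w hG⟩
  obtain ⟨-, hv, hw, hG | ⟨⟨u, hu, hvu⟩, u', hu', hwu'⟩⟩ := reconn_adj_iff.1 hr
  · exact hfar.2 ⟨w, hwa, v, hvb, G.symm v w hG⟩
  have hta : t ⊆ a := (hcompat t ht a ha).subset_of_adj hwa (Finset.mem_sdiff.1 hw).2 hu' hwu'
  have htb : t ⊆ b := (hcompat t ht b hb).subset_of_adj hvb (Finset.mem_sdiff.1 hv).2 hu hvu
  exact Finset.disjoint_left.1 hfar.1 (hta hu) (htb hu)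

theorem exists_minimal_tube (hsub : ∀ t ∈ T, t ⊆ G.verts)
    (hbasis : @TopologicalSpace.IsTopologicalBasis {x // x ∈ G.verts} (tubingTop G T)
      (tubeSets G T)) {v : ℕ} (hv : v ∈ G.verts) :
    ∃ c ∈ T, v ∈ c ∧ ∀ t ∈ T, v ∈ t → c ⊆ t := by
  let := tubingTop G T
  obtain ⟨_, ⟨t₀, ht₀, rfl⟩, hvt₀⟩ : (⟨v, hv⟩ : {x // x ∈ G.verts}) ∈ ⋃₀ tubeSets G T := by
    rw [hbasis.sUnion_eq]
    trivial
  obtain ⟨c, hc, hcmin⟩ := Finset.exists_min_image (T.filter (v ∈ ·)) Finset.card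
    ⟨t₀, Finset.mem_filter.2 ⟨ht₀, hvt₀⟩⟩
  obtain ⟨hcT, hvc⟩ := Finset.mem_filter.1 hc
  refine ⟨c, hcT, hvc, fun t ht hvt => ?_⟩
  obtain ⟨_, ⟨c', hc', rfl⟩, hvc', hc'ct⟩ :=
    hbasis.exists_subset_inter _ ⟨c, hcT, rfl⟩ _ ⟨t, ht, rfl⟩ ⟨v, hv⟩ ⟨hvc, hvt⟩
  replace hc'ct : c' ⊆ c ∩ t := fun y hy =>
    Finset.mem_inter.2 (@hc'ct ⟨y, hsub c' hc' hy⟩ hy)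
  obtain rfl : c' = c := Finset.eq_of_subset_of_card_le
    (hc'ct.trans Finset.inter_subset_left) (hcmin c' (Finset.mem_filter.2 ⟨hc', hvc'⟩))
  exact hc'ct.trans Finset.inter_subset_right

/-- Among the tubes inside `a ∩ b` adjacent to `a \ b` take a largest one, `c`, adjacent to
`p ∈ a \ b`; leaving `c` inside `b` along an edge `r s`, the reconnected edge `p s` of
`Γ_c^*` forces `s ∈ a`, and the edge `r s` forces `r` into the minimal tube `d` of `s`.
Then `c` and `d` can be neither nested nor far apart. -/
theorem false_of_not_compatible_of_inter_nonempty (hT : ∀ t ∈ T, IsTube G t)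
    (hmin : ∀ v ∈ G.verts, ∃ c ∈ T, v ∈ c ∧ ∀ t ∈ T, v ∈ t → c ⊆ t)
    (hcomp : ∀ v w, ReconnAdj G T v w → TubeComparable T v w)
    {a b : Finset ℕ} (ha : a ∈ T) (hb : b ∈ T) (hab : ¬ a ⊆ b) (hba : ¬ b ⊆ a)
    (hint : (a ∩ b).Nonempty) (ih : ∀ c ∈ T, ∀ d ∈ T, c ⊂ a → d ⊂ b → Compatible G c d) :
    False := by
  obtain ⟨x, hxab⟩ := hint
  rw [Finset.mem_inter] at hxab
  obtain ⟨v₀, hv₀a, hv₀b⟩ := Finset.not_subset.1 hab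
  obtain ⟨w₀, hw₀b, hw₀a⟩ := Finset.not_subset.1 hba
  set S := T.filter fun c => c ⊆ a ∩ b ∧ ∃ p ∈ a \ b, ∃ u ∈ c, G.Adj p u
  have hS : S.Nonempty := by
    obtain ⟨q, p, hqb, hpb, hqa, hpa, hqp⟩ :=
      ((hT a ha).2.2 x hxab.1 v₀ hv₀a).exists_boundary_step (P := (· ∈ b)) hxab.2 hv₀b
    obtain ⟨e, he, hqe, hemin⟩ := hmin q ((hT a ha).2.1 hqa)
    exact ⟨e, Finset.mem_filter.2 ⟨he, Finset.subset_inter (hemin a ha hqa) (hemin b hb hqb),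
      p, Finset.mem_sdiff.2 ⟨hpa, hpb⟩, q, hqe, G.symm q p hqp⟩⟩
  obtain ⟨c, hcS, hcmax⟩ := Finset.exists_max_image S Finset.card hS
  obtain ⟨hc, hcab, p, hp, u, huc, hpu⟩ := Finset.mem_filter.1 hcS
  obtain ⟨hca, hcb⟩ := Finset.subset_inter_iff.1 hcab
  obtain ⟨hpa, hpb⟩ := Finset.mem_sdiff.1 hp
  obtain ⟨r, s, hrc, hsc, -, hsb, hrs⟩ :=
    ((hT b hb).2.2 u (hcb huc) w₀ hw₀b).exists_boundary_step (P := (· ∈ c)) huc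
      fun h => hw₀a (hca h)
  obtain ⟨d, hd, hsd, hdmin⟩ := hmin s ((hT b hb).2.1 hsb)
  have hdb : d ⊆ b := hdmin b hb hsb
  have hsa : s ∈ a := by
    by_contra hsa
    have hps : ReconnAdj G T p s := Or.inr ⟨c, hc, reconn_adj_iff.2
      ⟨fun h => hpb (h ▸ hsb), Finset.mem_sdiff.2 ⟨(hT a ha).2.1 hpa, fun h => hpb (hcb h)⟩,
        Finset.mem_sdiff.2 ⟨(hT b hb).2.1 hsb, hsc⟩,
        Or.inr ⟨⟨u, huc, hpu⟩, r, hrc, G.symm r s hrs⟩⟩⟩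
    exact hpb (hdb ((hcomp p s hps).mem_of_mem_of_not_mem ha hpa hsa hd hsd))
  have hrd : r ∈ d := (hcomp r s (Or.inl hrs)).mem_of_mem_of_not_mem hc hrc hsc hd hsd
  have hcd := ih c hc d hd (hca.ssubset_of_ne fun h => hv₀b (hcb (h ▸ hv₀a)))
    (hdb.ssubset_of_ne fun h => hw₀a (hdmin a ha hsa (h ▸ hw₀b)))
  rcases hcd with hcd | hdc | hfar
  · have hdS : d ∈ S := Finset.mem_filter.2
      ⟨hd, Finset.subset_inter (hdmin a ha hsa) hdb, p, hp, u, hcd huc, hpu⟩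
    exact (hcmax d hdS).not_gt (Finset.card_lt_card (hcd.ssubset_of_ne
      fun h => hsc (h ▸ hsd)))
  · exact hsc (hdc hsd)
  · exact Finset.disjoint_left.1 hfar.1 hrc hrd

theorem compatible_of_tubeComparable (hT : ∀ t ∈ T, IsTube G t)
    (hmin : ∀ v ∈ G.verts, ∃ c ∈ T, v ∈ c ∧ ∀ t ∈ T, v ∈ t → c ⊆ t)
    (hcomp : ∀ v w, ReconnAdj G T v w → TubeComparable T v w)
    {a b : Finset ℕ} (ha : a ∈ T) (hb : b ∈ T) : Compatible G a b := by
  by_cases hab : a ⊆ b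
  · exact Or.inl hab
  by_cases hba : b ⊆ a
  · exact Or.inr (Or.inl hba)
  by_cases hint : (a ∩ b).Nonempty
  · exact (false_of_not_compatible_of_inter_nonempty hT hmin hcomp ha hb hab hba hint
      fun c hc d hd hca hdb => compatible_of_tubeComparable hT hmin hcomp hc hd).elim
  have hdisj : Disjoint a b :=
    Finset.disjoint_iff_inter_eq_empty.2 (Finset.not_nonempty_iff_eq_empty.1 hint)
  refine Or.inr (Or.inr ⟨hdisj, ?_⟩)
  rintro ⟨v, hva, w, hwb, hvw⟩
  exact Finset.disjoint_left.1 hdisj hva ((hcomp v w (Or.inl hvw)).mem_of_mem_of_not_mem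
    ha hva (Finset.disjoint_right.1 hdisj hwb) hb hwb)
termination_by a.card + b.card
decreasing_by exact Nat.add_lt_add (Finset.card_lt_card hca) (Finset.card_lt_card hdb)

theorem univ_mem_of_compatible (hc : IsConnGraph G) (hT : ∀ t ∈ T, IsTube G t)
    (hcover : ∀ v ∈ G.verts, ∃ t ∈ T, v ∈ t)
    (hcomp : ∀ v w, ReconnAdj G T v w → TubeComparable T v w)
    (hcompat : ∀ a ∈ T, ∀ b ∈ T, Compatible G a b) : G.verts ∈ T := by
  obtain ⟨v, hv⟩ := hc.1
  obtain ⟨t, ht, -⟩ := hcover v hv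
  obtain ⟨m, hm, hmmax⟩ := Finset.exists_max_image T Finset.card ⟨t, ht⟩
  have hclosed : ∀ y z, y ∈ m → G.Adj y z → z ∈ m := by
    intro y z hy hyz
    obtain ⟨t, ht, hzt⟩ := hcover z (G.support y z hyz).2
    refine (hcomp y z (Or.inl hyz)).elim (fun h => ?_) (fun h => h m hm hy)
    rcases hcompat m hm t ht with hmt | htm | hfar
    · exact Finset.eq_of_subset_of_card_le hmt (hmmax t ht) ▸ hzt
    · exact htm hzt
    · exact absurd (h t ht hzt) (Finset.disjoint_left.1 hfar.1 hy)
  obtain ⟨x, hx⟩ := (hT m hm).1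
  have hverts : G.verts ⊆ m := fun w hw => by_contra fun hwm => by
    obtain ⟨y, z, hy, hz, -, -, hyz⟩ :=
      (hc.2.2 x ((hT m hm).2.1 hx) w hw).exists_boundary_step (P := (· ∈ m)) hx hwm
    exact hz (hclosed y z hy hyz)
  exact Finset.Subset.antisymm (hT m hm).2.1 hverts ▸ hm

end CDTub

open CDTub in
/-- Theorem (topological characterization of tubings): a collection `T` of tubes of a
finite connected simple graph `Γ` is a tubing iff `T` is a topological basis on the
vertex set such that any two vertices forming an edge of `Γ` or of a reconnected
complement `Γ_t^*` (for `t ∈ T`) are topologically connected as a two-point subspace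
in the topology generated by `T`. -/
theorem tubing_iff_basis_connectivity (G : FinGraph) (hc : IsConnGraph G)
    (T : Finset (Finset ℕ)) (hT : ∀ t ∈ T, IsTube G t) :
    IsTubing G T ↔
      (@TopologicalSpace.IsTopologicalBasis {x // x ∈ G.verts} (tubingTop G T)
          (tubeSets G T) ∧
        ∀ v w : ℕ, (G.Adj v w ∨ ∃ t ∈ T, (reconn G t).Adj v w) →
          @IsConnected {x // x ∈ G.verts} (tubingTop G T)
            {x : {x // x ∈ G.verts} | (x : ℕ) = v ∨ (x : ℕ) = w}) := by
  constructor
  · rintro ⟨huniv, -, hcompat⟩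
    rw [forall_compatible_iff] at hcompat
    refine ⟨isTopologicalBasis_of_compatible huniv hcompat,
      fun v w (hvw : ReconnAdj G T v w) => ?_⟩
    rw [isConnected_iff_tubeComparable hvw.mem_verts.1 hvw.mem_verts.2]
    exact tubeComparable_of_compatible hcompat hvw
  · rintro ⟨hbasis, hconn⟩
    have hcomp : ∀ v w, ReconnAdj G T v w → TubeComparable T v w := fun v w hvw =>
      (isConnected_iff_tubeComparable hvw.mem_verts.1 hvw.mem_verts.2).1 (hconn v w hvw)
    have hmin := fun v (hv : v ∈ G.verts) =>
      exists_minimal_tube (fun t ht => (hT t ht).2.1) hbasis hv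
    have hcompat : ∀ a ∈ T, ∀ b ∈ T, Compatible G a b := fun a ha b hb =>
      compatible_of_tubeComparable hT hmin hcomp ha hb
    have hcover : ∀ v ∈ G.verts, ∃ t ∈ T, v ∈ t := fun v hv =>
      (hmin v hv).imp fun _ h => ⟨h.1, h.2.1⟩
    exact ⟨univ_mem_of_compatible hc hT hcover hcomp hcompat, hT,
      forall_compatible_iff.2 hcompat⟩
end
end

section
/- If T is a tubing on a finite connected simple graph Γ, then any pair of vertices connected by a path in the graph Γ (a sequence of edges) are also connected by a topological path (a continuous map from [0,1] to the vertex set) in the topology generated by T. Moreover, given the graphical path, there exists a topological path joining the two vertices whose range is precisely the set of vertices of the graphical path. -/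
open scoped Classical
open TensorProduct

noncomputable section

theorem Specializes.exists_path_range_eq_pair {X : Type*} [TopologicalSpace X] {x y : X}
    (h : x ⤳ y) : ∃ γ : Path x y, Set.range γ = {x, y} := by
  obtain ⟨γ, hγ⟩ := h.joinedIn (F := {x, y}) (by simp) (by simp)
  refine ⟨γ, (Set.range_subset_iff.2 hγ).antisymm ?_⟩
  rintro z (rfl | rfl)
  exacts [⟨0, γ.source⟩, ⟨1, γ.target⟩]

theorem List.IsChain.exists_path_range_eq {X : Type*} [TopologicalSpace X] {l : List X}
    (hl : l.IsChain fun a b => a ⤳ b ∨ b ⤳ a) {x y : X}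
    (hx : l.head? = some x) (hy : l.getLast? = some y) :
    ∃ γ : Path x y, Set.range γ = {z | z ∈ l} := by
  induction l generalizing x with
  | nil => simp at hx
  | cons a tail ih =>
    obtain rfl : a = x := by simpa using hx
    cases tail with
    | nil =>
      obtain rfl : a = y := by simpa using hy
      exact ⟨Path.refl a, by simp [Path.refl_range]⟩
    | cons b rest =>
      rw [List.isChain_cons_cons] at hl
      obtain ⟨γ₂, hγ₂⟩ := ih hl.2 rfl (by rwa [List.getLast?_cons_cons] at hy)
      obtain ⟨γ₁, hγ₁⟩ : ∃ γ : Path a b, Set.range γ = {a, b} := by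
        rcases hl.1 with h | h
        · exact h.exists_path_range_eq_pair
        · obtain ⟨γ, hγ⟩ := h.exists_path_range_eq_pair
          exact ⟨γ.symm, by rw [Path.symm_range, hγ, Set.pair_comm]⟩
      refine ⟨γ₁.trans γ₂, ?_⟩
      rw [Path.trans_range, hγ₁, hγ₂]
      ext z
      simp [or_assoc]

namespace CDTub

theorem mem_or_mem_of_adj {G : FinGraph} {T : Finset (Finset ℕ)}
    (hT : (T : Set (Finset ℕ)).Pairwise (Compatible G)) {v w : ℕ} (hvw : G.Adj v w) :
    (∀ t ∈ T, w ∈ t → v ∈ t) ∨ (∀ t ∈ T, v ∈ t → w ∈ t) := by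
  by_contra! ⟨⟨s, hs, hws, hvs⟩, ⟨t, ht, hvt, hwt⟩⟩
  have hst : s ≠ t := by rintro rfl; exact hvs hvt
  rcases hT hs ht hst with hsub | hsub | ⟨-, hfar⟩
  · exact hwt (hsub hws)
  · exact hvs (hsub hvt)
  · exact hfar ⟨w, hws, v, hvt, G.symm _ _ hvw⟩

theorem specializes_or_specializes_of_adj {G : FinGraph} {T : Finset (Finset ℕ)}
    (hT : (T : Set (Finset ℕ)).Pairwise (Compatible G)) {v w : {x // x ∈ G.verts}}
    (hvw : G.Adj v w) :
    @Specializes _ (tubingTop G T) v w ∨ @Specializes _ (tubingTop G T) w v := by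
  refine (mem_or_mem_of_adj hT hvw).imp (fun h => ?_) fun h => ?_ <;>
  · refine TopologicalSpace.specializes_generateFrom_iff.2 ?_
    rintro _ ⟨t, ht, rfl⟩
    exact h t ht

end CDTub

open CDTub in
theorem graphical_path_gives_topological_path_general (G : FinGraph)
    (T : Finset (Finset ℕ)) (hT : IsTubing G T)
    (l : List ℕ) (hchain : l.Chain' G.Adj)
    (v v' : ℕ) (hv : v ∈ G.verts) (hv' : v' ∈ G.verts)
    (hhead : l.head? = some v) (hlast : l.getLast? = some v') :
    (∃ f : unitInterval → {x // x ∈ G.verts},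
      @Continuous _ _ _ (tubingTop G T) f ∧ f 0 = ⟨v, hv⟩ ∧ f 1 = ⟨v', hv'⟩) ∧
    (∃ f : unitInterval → {x // x ∈ G.verts},
      @Continuous _ _ _ (tubingTop G T) f ∧ f 0 = ⟨v, hv⟩ ∧ f 1 = ⟨v', hv'⟩ ∧
      Set.range f = {x : {x // x ∈ G.verts} | (x : ℕ) ∈ l}) := by
  let _ := tubingTop G T
  have hverts : ∀ x ∈ l, x ∈ G.verts :=
    hchain.induction _ _ (fun _ _ h _ => (G.support _ _ h).2)
      fun hne => by
        rw [List.head?_eq_some_head hne, Option.some_inj] at hhead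
        exact hhead ▸ hv
  lift l to List {x // x ∈ G.verts} using hverts
  have hchain' : l.IsChain fun a b => a ⤳ b ∨ b ⤳ a :=
    ((List.isChain_map _).1 hchain).imp fun _ _ => specializes_or_specializes_of_adj hT.2.2
  obtain ⟨γ, hγ⟩ := hchain'.exists_path_range_eq
    (x := ⟨v, hv⟩) (y := ⟨v', hv'⟩)
    (Option.map_injective Subtype.val_injective (by rwa [← List.head?_map]))
    (Option.map_injective Subtype.val_injective (by rwa [← List.getLast?_map]))
  refine ⟨⟨γ, γ.continuous, γ.source, γ.target⟩, γ, γ.continuous, γ.source, γ.target, ?_⟩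
  rw [hγ]
  ext x
  simp

open CDTub in
/-- If `T` is a tubing on a connected graph `Γ`, any two vertices joined by a graphical
path are joined by a topological path in the topology generated by `T`; moreover there
is a topological path whose range is precisely the set of vertices of the graphical
path. -/
theorem graphical_path_gives_topological_path (G : FinGraph) (hc : IsConnGraph G)
    (T : Finset (Finset ℕ)) (hT : IsTubing G T)
    (l : List ℕ) (hl : l ≠ []) (hchain : l.Chain' G.Adj)
    (v v' : ℕ) (hv : v ∈ G.verts) (hv' : v' ∈ G.verts)
    (hhead : l.head? = some v) (hlast : l.getLast? = some v') :
    (∃ f : unitInterval → {x // x ∈ G.verts},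
      @Continuous _ _ _ (tubingTop G T) f ∧ f 0 = ⟨v, hv⟩ ∧ f 1 = ⟨v', hv'⟩) ∧
    (∃ f : unitInterval → {x // x ∈ G.verts},
      @Continuous _ _ _ (tubingTop G T) f ∧ f 0 = ⟨v, hv⟩ ∧ f 1 = ⟨v', hv'⟩ ∧
      Set.range f = {x : {x // x ∈ G.verts} | (x : ℕ) ∈ l}) :=
  graphical_path_gives_topological_path_general G T hT l hchain v v' hv hv' hhead hlast
end
end

section
/- Let Γ be a finite simple graph and let t and t' be disjoint tubes of Γ (so t' is a tube of the reconnected complement Γ_t^* and t is a tube of Γ_{t'}^*). Then the iterated reconnected complements coincide: (Γ_t^*)_{t'}^* = (Γ_{t'}^*)_t^*; both have vertex set the vertices of Γ not in t ∪ t', and they have exactly the same edges. -/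
open scoped Classical
open TensorProduct

noncomputable section

namespace CDTub

variable (G : FinGraph) {t t' : Finset ℕ}

def AdjTo (s : Finset ℕ) (v : ℕ) : Prop := ∃ u ∈ s, G.Adj v u

theorem reconn_verts : (reconn G t).verts = G.verts \ t := by
  simp [reconn, reconnAll]

theorem reconn_adj {v w : ℕ} :
    (reconn G t).Adj v w ↔ v ≠ w ∧ v ∈ G.verts \ t ∧ w ∈ G.verts \ t ∧
      (G.Adj v w ∨ AdjTo G t v ∧ AdjTo G t w) := by
  simp [reconn, reconnAll, AdjTo]

theorem reconn_reconn_verts :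
    (reconn (reconn G t) t').verts = G.verts \ (t ∪ t') := by
  rw [reconn_verts, reconn_verts, sdiff_sdiff_left, Finset.sup_eq_union]

theorem linked_comm {a b : Finset ℕ} : Linked G a b ↔ Linked G b a := by
  unfold Linked
  constructor <;> rintro ⟨hd, x, hx, y, hy, hxy⟩ <;> exact ⟨hd.symm, y, hy, x, hx, G.symm _ _ hxy⟩

theorem adjTo_reconn_iff (hdisj : Disjoint t t') {v : ℕ} (hv : v ∈ G.verts \ t) (hv' : v ∉ t') :
    AdjTo (reconn G t) t' v ↔ AdjTo G t' v ∨ AdjTo G t v ∧ Linked G t t' := by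
  constructor
  · rintro ⟨u, hu, hvu⟩
    rcases ((reconn_adj G).mp hvu).2.2.2 with hvu | ⟨hvt, ⟨x, hx, hux⟩⟩
    · exact Or.inl ⟨u, hu, hvu⟩
    · exact Or.inr ⟨hvt, hdisj, x, hx, u, hu, G.symm _ _ hux⟩
  · have hmem : ∀ {x u}, u ∈ t' → G.Adj x u → u ∈ G.verts \ t := fun hu hxu =>
      Finset.mem_sdiff.mpr ⟨(G.support _ _ hxu).2, Finset.disjoint_right.mp hdisj hu⟩
    rintro (⟨u, hu, hvu⟩ | ⟨hvt, -, a, ha, b, hb, hab⟩)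
    · exact ⟨u, hu, (reconn_adj G).mpr ⟨(ne_of_mem_of_not_mem hu hv').symm, hv, hmem hu hvu,
        Or.inl hvu⟩⟩
    · exact ⟨b, hb, (reconn_adj G).mpr ⟨(ne_of_mem_of_not_mem hb hv').symm, hv, hmem hb hab,
        Or.inr ⟨hvt, a, ha, G.symm _ _ hab⟩⟩⟩

theorem reconn_reconn_adj (hdisj : Disjoint t t') {v w : ℕ} :
    (reconn (reconn G t) t').Adj v w ↔ v ≠ w ∧ v ∈ G.verts \ (t ∪ t') ∧
      w ∈ G.verts \ (t ∪ t') ∧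
      (G.Adj v w ∨ AdjTo G t v ∧ AdjTo G t w ∨
        (AdjTo G t' v ∨ AdjTo G t v ∧ Linked G t t') ∧
          (AdjTo G t' w ∨ AdjTo G t w ∧ Linked G t t')) := by
  rw [reconn_adj, ← reconn_verts, reconn_reconn_verts]
  refine and_congr_right fun hvw => and_congr_right fun hv => and_congr_right fun hw => ?_
  simp only [Finset.mem_sdiff, Finset.mem_union, not_or] at hv hw
  rw [reconn_adj, adjTo_reconn_iff G hdisj (Finset.mem_sdiff.mpr ⟨hv.1, hv.2.1⟩) hv.2.2,
    adjTo_reconn_iff G hdisj (Finset.mem_sdiff.mpr ⟨hw.1, hw.2.1⟩) hw.2.2]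
  simp only [Finset.mem_sdiff, hv, hw, hvw, not_false_eq_true, and_self, true_and, ne_eq, or_assoc]

end CDTub

open CDTub in
theorem reconn_comm_general (G : FinGraph) (t t' : Finset ℕ)
    (hdisj : Disjoint t t') :
    (reconn (reconn G t) t').verts = (reconn (reconn G t') t).verts ∧
    (reconn (reconn G t) t').verts = G.verts \ (t ∪ t') ∧
    ∀ v w, (reconn (reconn G t) t').Adj v w ↔ (reconn (reconn G t') t).Adj v w := by
  refine ⟨by rw [reconn_reconn_verts, reconn_reconn_verts, Finset.union_comm],
    reconn_reconn_verts G, fun v w => ?_⟩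
  rw [reconn_reconn_adj G hdisj, reconn_reconn_adj G hdisj.symm, linked_comm G,
    Finset.union_comm t']
  -- both sides are now the same Boolean combination of adjacencies of `v`, `w` to `t`, `t'`
  tauto

open CDTub in
/-- For disjoint tubes `t`, `t'` of `Γ`, the iterated reconnected complements coincide:
`(Γ_t^*)_{t'}^* = (Γ_{t'}^*)_t^*`, with common vertex set `Nod(Γ) ∖ (t ∪ t')` and the
same edges. -/
theorem reconn_comm (G : FinGraph) (t t' : Finset ℕ)
    (ht : IsTube G t) (ht' : IsTube G t') (hdisj : Disjoint t t') :
    (reconn (reconn G t) t').verts = (reconn (reconn G t') t).verts ∧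
    (reconn (reconn G t) t').verts = G.verts \ (t ∪ t') ∧
    ∀ v w, (reconn (reconn G t) t').Adj v w ↔ (reconn (reconn G t') t).Adj v w :=
  reconn_comm_general G t t' hdisj
end
end

section
/- Let T be a tubing of a finite connected simple graph Γ, let t ∈ T, and let S be a tubing of the induced subgraph Γ_t that is compatible with the restriction T|_t (i.e., the union of S and T|_t is a tubing of Γ_t). Then T ∘_t S, defined as the family of all tubes belonging to T together with all tubes of S (viewed as tubes of Γ), is a tubing of Γ. -/
open scoped Classical
open TensorProduct

noncomputable section

/-!
A tube `s` of `S` lies in `t`. A tube `u ∈ T` inside `t` is compatible with `s` because both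
belong to the tubing `T|_t ∪ S` of `Γ_t`, and compatibility in `Γ_t` of subsets of `t` is
compatibility in `Γ`. A tube `u ∈ T` not inside `t` either contains `t`, hence `s`, or is far
apart from `t`, hence from `s`.
-/

namespace CDTub

variable {G : FinGraph}

lemma FarApart.symm {a b : Finset ℕ} (h : FarApart G a b) : FarApart G b a :=
  ⟨h.1.symm, fun ⟨v, hv, w, hw, hadj⟩ => h.2 ⟨w, hw, v, hv, G.symm _ _ hadj⟩⟩

lemma FarApart.mono_right {a b b' : Finset ℕ} (h : FarApart G a b) (hb : b' ⊆ b) :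
    FarApart G a b' :=
  ⟨h.1.mono_right hb, fun ⟨v, hv, w, hw, hadj⟩ => h.2 ⟨v, hv, w, hb hw, hadj⟩⟩

lemma Compatible.symm {a b : Finset ℕ} (h : Compatible G a b) : Compatible G b a := by
  rcases h with h | h | h
  · exact Or.inr (Or.inl h)
  · exact Or.inl h
  · exact Or.inr (Or.inr h.symm)

lemma Compatible.of_not_subset {u t s : Finset ℕ} (h : Compatible G u t) (hut : ¬ u ⊆ t)
    (hst : s ⊆ t) : Compatible G u s := by
  rcases h with h | h | h
  · exact absurd h hut
  · exact Or.inr (Or.inl (hst.trans h))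
  · exact Or.inr (Or.inr (h.mono_right hst))

lemma IsTube.of_induce {t s : Finset ℕ} (h : IsTube (induce G t) s) (ht : t ⊆ G.verts) :
    IsTube G s :=
  ⟨h.1, h.2.1.trans ht, fun v hv w hw =>
    (h.2.2 v hv w hw).lift id fun _ _ hab => ⟨hab.1, hab.2.1, hab.2.2.2.2⟩⟩

lemma Compatible.of_induce {t a b : Finset ℕ} (h : Compatible (induce G t) a b) (ha : a ⊆ t)
    (hb : b ⊆ t) : Compatible G a b := by
  rcases h with h | h | h
  · exact Or.inl h
  · exact Or.inr (Or.inl h)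
  · refine Or.inr (Or.inr ⟨h.1, ?_⟩)
    exact fun ⟨v, hv, w, hw, hadj⟩ => h.2 ⟨v, hv, w, hw, ha hv, hb hw, hadj⟩

lemma IsTubing.subset_of_mem {t : Finset ℕ} {F : Finset (Finset ℕ)}
    (h : IsTubing (induce G t) F) {a : Finset ℕ} (ha : a ∈ F) : a ⊆ t :=
  (h.2.1 a ha).2.1

lemma IsTubing.compatible_of_induce {t : Finset ℕ} {F : Finset (Finset ℕ)}
    (h : IsTubing (induce G t) F) {a b : Finset ℕ} (ha : a ∈ F) (hb : b ∈ F) (hne : a ≠ b) :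
    Compatible G a b :=
  (h.2.2 a ha b hb hne).of_induce (h.subset_of_mem ha) (h.subset_of_mem hb)

lemma IsTubing.union {T S : Finset (Finset ℕ)} (hT : IsTubing G T) (hS : ∀ s ∈ S, IsTube G s)
    (hSS : ∀ a ∈ S, ∀ b ∈ S, a ≠ b → Compatible G a b)
    (hTS : ∀ u ∈ T, ∀ s ∈ S, u ≠ s → Compatible G u s) : IsTubing G (T ∪ S) := by
  refine ⟨Finset.mem_union_left _ hT.1, fun s hs => ?_, fun a ha b hb hne => ?_⟩
  · rcases Finset.mem_union.1 hs with hs | hs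
    exacts [hT.2.1 s hs, hS s hs]
  · rcases Finset.mem_union.1 ha with ha | ha <;> rcases Finset.mem_union.1 hb with hb | hb
    · exact hT.2.2 a ha b hb hne
    · exact hTS a ha b hb hne
    · exact (hTS b hb a ha hne.symm).symm
    · exact hSS a ha b hb hne

end CDTub

open CDTub in
theorem circ_is_tubing_general (G : FinGraph)
    (T : Finset (Finset ℕ)) (hT : IsTubing G T) (t : Finset ℕ) (ht : t ∈ T)
    (S : Finset (Finset ℕ))
    (hcomp : IsTubing (induce G t) (restrictT T t ∪ S)) :
    IsTubing G (T ∪ S) := by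
  have hS : ∀ s ∈ S, s ∈ restrictT T t ∪ S := fun s => Finset.mem_union_right _
  refine hT.union (fun s hs => (hcomp.2.1 s (hS s hs)).of_induce (hT.2.1 t ht).2.1)
    (fun a ha b hb => hcomp.compatible_of_induce (hS a ha) (hS b hb)) fun u hu s hs hne => ?_
  by_cases hut : u ⊆ t
  · have hu' : u ∈ restrictT T t ∪ S :=
      Finset.mem_union_left _ (Finset.mem_filter.2 ⟨hu, hut⟩)
    exact hcomp.compatible_of_induce hu' (hS s hs) hne
  · have hne_t : u ≠ t := fun h => hut h.le
    exact (hT.2.2 u hu t ht hne_t).of_not_subset hut (hcomp.subset_of_mem (hS s hs))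

open CDTub in
/-- If `S` is a tubing of `Γ_t` compatible with `T|_t`, then `T ∘_t S = T ∪ S` is a
tubing of `Γ`. -/
theorem circ_is_tubing (G : FinGraph) (hc : IsConnGraph G)
    (T : Finset (Finset ℕ)) (hT : IsTubing G T) (t : Finset ℕ) (ht : t ∈ T)
    (S : Finset (Finset ℕ)) (hS : IsTubing (induce G t) S)
    (hcomp : IsTubing (induce G t) (restrictT T t ∪ S)) :
    IsTubing G (T ∪ S) :=
  circ_is_tubing_general G T hT t ht S hcomp
end
end

section
/- Let T be a tubing of a finite connected simple graph Γ, and let t, t' ∈ T be two (possibly nested, possibly disjoint) tubes of T. For any tubings S of (Γ_t)_{T|_t}^* and S' of (Γ_{t'})_{T|_{t'}}^*, one has: (1) t' is a tube of the tubing γ_t(T;S) and t is a tube of γ_{t'}(T;S'); and (2) γ_{t'}(γ_t(T;S); S') = γ_t(γ_{t'}(T;S'); S). -/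
open scoped Classical
open TensorProduct

noncomputable section

/-!
A tube of `(Γ_t)^*_{T|_t}` lies in `t` and avoids every maximal proper tube of `T|_t`, hence
every proper tube of `T|_t`. So if a new tube `s̃` of `γ_t(T;S)` lies in another tube `t'` of
`T`, compatibility of `t` and `t'` forces `t ⊊ t'`, and `s̃ ⊆ t`. The new tubes thus add nothing
to the maximal proper tubes of the restriction to `t'`, on which alone the tildes of a
`t'`-substitution depend: both sides of the identity are `T` together with the tilde images of
`S` and of `S'`.
-/

namespace CDTub

variable {G : FinGraph} {T S : Finset (Finset ℕ)} {t t' s : Finset ℕ}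

theorem mem_MaxtP_iff {m : Finset ℕ} : m ∈ MaxtP G T ↔ Maximal (· ∈ properTubes G T) m := by
  simp only [MaxtP, Finset.mem_filter, maximal_iff]

theorem restrictT_subset : restrictT T t ⊆ T := Finset.filter_subset _ _

theorem MaxtP_subset : MaxtP G T ⊆ T := (Finset.filter_subset _ _).trans (Finset.filter_subset _ _)

theorem tildeT_subset_of_subset {u : Finset ℕ} (hs : s ⊆ u) (hT : ∀ m ∈ T, m ⊆ u) :
    tildeT G T s ⊆ u :=
  Finset.union_subset hs <| Finset.biUnion_subset.2 fun m hm =>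
    hT m (MaxtP_subset (Finset.filter_subset _ _ hm))

theorem tildeT_eq_of_MaxtP_eq {T' : Finset (Finset ℕ)} (h : MaxtP G T = MaxtP G T') :
    tildeT G T = tildeT G T' := by
  funext s
  simp only [tildeT, h]

theorem gammaSub_eq_union_image :
    gammaSub G T t S = T ∪ S.image (tildeT (induce G t) (restrictT T t)) := by
  rw [gammaSub, substT, ← Finset.union_assoc, Finset.union_eq_left.2 restrictT_subset]

theorem subset_gammaSub : T ⊆ gammaSub G T t S := Finset.subset_union_left

theorem subset_of_tube_gammaStar_subset (hcompat : Compatible G t t') (ht' : t' ∈ T)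
    (hne : t ≠ t') (hs : IsTube (gammaStar (induce G t) (restrictT T t)) s) (hst' : s ⊆ t') :
    t ⊆ t' := by
  obtain ⟨v, hv⟩ := hs.1
  have hvt : v ∈ t \ (MaxtP (induce G t) (restrictT T t)).biUnion id := hs.2.1 hv
  rw [Finset.mem_sdiff, Finset.mem_biUnion] at hvt
  rcases hcompat with h | h | h
  · exact h
  · have ht'P : t' ∈ properTubes (induce G t) (restrictT T t) :=
      Finset.mem_filter.2 ⟨Finset.mem_filter.2 ⟨ht', h⟩, hne.symm⟩
    obtain ⟨m, ht'm, hm⟩ := Finset.exists_le_maximal _ ht'P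
    exact absurd ⟨m, mem_MaxtP_iff.2 hm, ht'm (hst' hv)⟩ hvt.2
  · exact absurd (hst' hv) (Finset.disjoint_left.1 h.1 hvt.1)

theorem MaxtP_restrictT_gammaSub (hcompat : Compatible G t t') (ht : t ∈ T) (ht' : t' ∈ T)
    (hne : t ≠ t') (hS : IsTubing (gammaStar (induce G t) (restrictT T t)) S) :
    MaxtP (induce G t') (restrictT (gammaSub G T t S) t') =
      MaxtP (induce G t') (restrictT T t') := by
  ext m
  simp only [mem_MaxtP_iff]
  refine maximal_iff_maximal_of_imp_of_forall
    (fun x hx => Finset.filter_subset_filter _ (Finset.filter_subset_filter _ subset_gammaSub) hx)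
    fun x hx => ?_
  simp only [properTubes, restrictT, Finset.mem_filter, gammaSub_eq_union_image,
    Finset.mem_union, Finset.mem_image] at hx
  obtain ⟨⟨hxT | ⟨s, hsS, rfl⟩, hxt'⟩, hxne⟩ := hx
  · exact ⟨x, le_rfl, Finset.mem_filter.2 ⟨Finset.mem_filter.2 ⟨hxT, hxt'⟩, hxne⟩⟩
  · have hs := hS.2.1 s hsS
    have hst : s ⊆ t := hs.2.1.trans Finset.sdiff_subset
    have htt' : t ⊆ t' :=
      subset_of_tube_gammaStar_subset hcompat ht' hne hs (Finset.subset_union_left.trans hxt')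
    exact ⟨t, tildeT_subset_of_subset hst fun m hm => (Finset.mem_filter.1 hm).2,
      Finset.mem_filter.2 ⟨Finset.mem_filter.2 ⟨ht, htt'⟩, hne⟩⟩

theorem gammaSub_gammaSub (hcompat : Compatible G t t') (ht : t ∈ T) (ht' : t' ∈ T)
    (hne : t ≠ t') (hS : IsTubing (gammaStar (induce G t) (restrictT T t)) S)
    (S' : Finset (Finset ℕ)) :
    gammaSub G (gammaSub G T t S) t' S' =
      T ∪ S.image (tildeT (induce G t) (restrictT T t)) ∪
        S'.image (tildeT (induce G t') (restrictT T t')) := by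
  rw [gammaSub_eq_union_image (T := gammaSub G T t S),
    tildeT_eq_of_MaxtP_eq (MaxtP_restrictT_gammaSub hcompat ht ht' hne hS), gammaSub_eq_union_image]

end CDTub

open CDTub in
theorem gamma_comm_general (G : FinGraph)
    (T : Finset (Finset ℕ)) (hT : IsTubing G T)
    (t t' : Finset ℕ) (ht : t ∈ T) (ht' : t' ∈ T) (hne : t ≠ t')
    (S S' : Finset (Finset ℕ))
    (hS : IsTubing (gammaStar (induce G t) (restrictT T t)) S)
    (hS' : IsTubing (gammaStar (induce G t') (restrictT T t')) S') :
    t' ∈ gammaSub G T t S ∧ t ∈ gammaSub G T t' S' ∧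
    gammaSub G (gammaSub G T t S) t' S' = gammaSub G (gammaSub G T t' S') t S := by
  refine ⟨subset_gammaSub ht', subset_gammaSub ht, ?_⟩
  have hcompat := hT.2.2 t ht t' ht' hne
  have hcompat' := hT.2.2 t' ht' t ht hne.symm
  rw [gammaSub_gammaSub hcompat ht ht' hne hS, gammaSub_gammaSub hcompat' ht' ht hne.symm hS',
    Finset.union_right_comm]

open CDTub in
/-- Independence of substitutions at different tubes: for tubes `t, t'` of a tubing `T`
and tubings `S` of `(Γ_t)_{T|_t}^*`, `S'` of `(Γ_{t'})_{T|_{t'}}^*`, one has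
`t' ∈ γ_t(T;S)` and `t ∈ γ_{t'}(T;S')`, and
`γ_{t'}(γ_t(T;S);S') = γ_t(γ_{t'}(T;S');S)`. -/
theorem gamma_comm (G : FinGraph) (hc : IsConnGraph G)
    (T : Finset (Finset ℕ)) (hT : IsTubing G T)
    (t t' : Finset ℕ) (ht : t ∈ T) (ht' : t' ∈ T) (hne : t ≠ t')
    (S S' : Finset (Finset ℕ))
    (hS : IsTubing (gammaStar (induce G t) (restrictT T t)) S)
    (hS' : IsTubing (gammaStar (induce G t') (restrictT T t')) S') :
    t' ∈ gammaSub G T t S ∧ t ∈ gammaSub G T t' S' ∧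
    gammaSub G (gammaSub G T t S) t' S' = gammaSub G (gammaSub G T t' S') t S :=
  gamma_comm_general G T hT t t' ht ht' hne S S' hS hS'
end
end
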